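/- arXiv:math/0703343 — 3 statements merged into one kernel-verified Lean document; each statement's English description precedes it below -/
import Mathlib

section
/- Let G be a finite group of order n such that every nontrivial complex representation of G has degree at least k (k ≥ 1). If A, B, C are three subsets of G such that |A|·|B|·|C| > n³/k, then there exists a triple (a, b, c) ∈ A × B × C with a·b = c. -/
/-!
Let `f = 1_A - |A|/n`, a function of mean zero, and `T f = f ∗ 1_B`, i.e.
`(T f) x = ∑_{b ∈ B} f (x b⁻¹)`. If `A B` misses `C`, then `T f` equals `-|A||B|/n` on `C`, so
`‖T f‖² ≥ |C| (|A||B|/n)²`, while `‖f‖² ≤ |A|`.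

The operator `T*T` commutes with left translations, so its eigenspaces are representations of `G`.
Expanding `f` in an eigenbasis, `‖T f‖² ≤ μ ‖f‖²` for an eigenvalue `μ` whose eigenspace
contains a vector `v` with `⟪v, f⟫ ≠ 0`; as `f` has mean zero, `v` is not constant, hence not
invariant, so that eigenspace has dimension at least `k`. The eigenvalue times its multiplicity
is at most the Hilbert–Schmidt norm `‖T‖²_HS = n |B|`, so `k ‖T f‖² ≤ n |B| ‖f‖²`, and together
`k |A||B||C| ≤ n³`.
-/

open Finset Module Module.End LinearMap RCLike
open scoped InnerProductSpace Pointwise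

section SpectralBounds

variable {𝕜 E F : Type*} [RCLike 𝕜]
  [NormedAddCommGroup E] [InnerProductSpace 𝕜 E] [FiniteDimensional 𝕜 E]
  [NormedAddCommGroup F] [InnerProductSpace 𝕜 F] [FiniteDimensional 𝕜 F]

theorem LinearMap.IsSymmetric.exists_mem_eigenspace_inner_ne_zero_re_inner_le
    {T : E →ₗ[𝕜] E} (hT : T.IsSymmetric) {f : E} (hf : f ≠ 0) :
    ∃ μ : ℝ, ∃ v ∈ eigenspace T (μ : 𝕜), ⟪v, f⟫_𝕜 ≠ 0 ∧ re ⟪f, T f⟫_𝕜 ≤ μ * ‖f‖ ^ 2 := by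
  classical
  set b := hT.eigenvectorBasis rfl
  set lam := hT.eigenvalues rfl
  have hsupp : (univ.filter fun i => ⟪b i, f⟫_𝕜 ≠ 0).Nonempty := by
    by_contra! h
    refine hf (b.toBasis.ext_elem fun i => ?_)
    simpa [OrthonormalBasis.coe_toBasis_repr_apply, OrthonormalBasis.repr_apply_apply]
      using filter_eq_empty_iff.1 h (mem_univ i)
  obtain ⟨i₀, hi₀, hmax⟩ := exists_max_image _ lam hsupp
  refine ⟨lam i₀, b i₀, (hT.hasEigenvector_eigenvectorBasis rfl i₀).1, (mem_filter.1 hi₀).2, ?_⟩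
  have hterm : ∀ i, re (⟪f, b i⟫_𝕜 * ⟪b i, T f⟫_𝕜) = lam i * ‖⟪b i, f⟫_𝕜‖ ^ 2 := fun i => by
    have hbi : T (b i) = (lam i : 𝕜) • b i := hT.apply_eigenvectorBasis rfl i
    rw [← hT, hbi, inner_smul_left, conj_ofReal, ← inner_conj_symm f, mul_left_comm,
      RCLike.conj_mul, ← ofReal_pow, ← ofReal_mul, ofReal_re]
  calc re ⟪f, T f⟫_𝕜 = ∑ i, lam i * ‖⟪b i, f⟫_𝕜‖ ^ 2 := by
        rw [← b.sum_inner_mul_inner, map_sum]; exact sum_congr rfl fun i _ => hterm i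
    _ ≤ ∑ i, lam i₀ * ‖⟪b i, f⟫_𝕜‖ ^ 2 := by
        refine sum_le_sum fun i _ => ?_
        by_cases hi : ⟪b i, f⟫_𝕜 = 0
        · simp [hi]
        · exact mul_le_mul_of_nonneg_right (hmax i (by simp [hi])) (sq_nonneg _)
    _ = lam i₀ * ‖f‖ ^ 2 := by rw [← mul_sum, b.sum_sq_norm_inner_right]

theorem LinearMap.norm_apply_sq_of_mem_eigenspace_adjoint_comp_self (T : E →ₗ[𝕜] F) {μ : ℝ}
    {v : E} (hv : v ∈ eigenspace (adjoint T ∘ₗ T) (μ : 𝕜)) : ‖T v‖ ^ 2 = μ * ‖v‖ ^ 2 := by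
  have h := congrArg re (adjoint_inner_right T v (T v))
  rw [mem_eigenspace_iff, comp_apply] at hv
  rw [hv, inner_smul_right, inner_self_eq_norm_sq_to_K,
    inner_self_eq_norm_sq_to_K, ← ofReal_pow, ← ofReal_pow, ← ofReal_mul, ofReal_re,
    ofReal_re] at h
  exact h.symm

theorem LinearMap.sum_norm_apply_sq_le_sum_norm_adjoint_apply_sq (T : E →ₗ[𝕜] F) {ι J : Type*}
    [Fintype ι] [Fintype J] (b : OrthonormalBasis ι 𝕜 F) {w : J → E} (hw : Orthonormal 𝕜 w) :
    ∑ j, ‖T (w j)‖ ^ 2 ≤ ∑ i, ‖adjoint T (b i)‖ ^ 2 :=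
  calc ∑ j, ‖T (w j)‖ ^ 2 = ∑ i, ∑ j, ‖⟪w j, adjoint T (b i)⟫_𝕜‖ ^ 2 := by
        simp_rw [← b.sum_sq_norm_inner_right, adjoint_inner_right, ← norm_inner_symm (T _)]
        exact sum_comm
    _ ≤ ∑ i, ‖adjoint T (b i)‖ ^ 2 :=
        sum_le_sum fun i _ => hw.sum_inner_products_le (x := adjoint T (b i))

theorem LinearMap.finrank_eigenspace_adjoint_comp_self_mul_le (T : E →ₗ[𝕜] F) {ι : Type*}
    [Fintype ι] (b : OrthonormalBasis ι 𝕜 F) (μ : ℝ) :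
    finrank 𝕜 (eigenspace (adjoint T ∘ₗ T) (μ : 𝕜)) * μ ≤ ∑ i, ‖adjoint T (b i)‖ ^ 2 := by
  set V := eigenspace (adjoint T ∘ₗ T) (μ : 𝕜)
  set w := stdOrthonormalBasis 𝕜 V
  have hw : Orthonormal 𝕜 fun j => (w j : E) := w.orthonormal.comp_linearIsometry V.subtypeₗᵢ
  calc finrank 𝕜 V * μ = ∑ j, ‖T (w j)‖ ^ 2 := by
        simp [T.norm_apply_sq_of_mem_eigenspace_adjoint_comp_self (w _).2, hw.1, mul_comm]
    _ ≤ _ := T.sum_norm_apply_sq_le_sum_norm_adjoint_apply_sq b hw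

end SpectralBounds

section Representation

variable {k G V : Type*} [CommRing k] [Monoid G] [AddCommGroup V] [Module k V]

def Representation.eigenspaceSubrep (ρ : Representation k G V) (S : End k V)
    (hS : ∀ g, Commute S (ρ g)) (μ : k) : Subrepresentation ρ where
  toSubmodule := eigenspace S μ
  apply_mem_toSubmodule g _ hv := mapsTo_genEigenspace_of_comm (hS g) μ 1 hv

theorem Subrepresentation.toRepresentation_ne_one {ρ : Representation k G V}
    {σ : Subrepresentation ρ} {v : V} (hv : v ∈ σ.toSubmodule) {g : G} (hg : ρ g v ≠ v) :
    σ.toRepresentation ≠ 1 :=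
  fun h => hg (congrArg Subtype.val (LinearMap.congr_fun (congrArg (· g) h) ⟨v, hv⟩))

end Representation

section Convolution

variable {G : Type*} [Group G]

noncomputable def leftTranslation : Representation ℂ G (EuclideanSpace ℂ G) where
  toFun g :=
    { toFun f := WithLp.toLp 2 fun x => f (g⁻¹ * x)
      map_add' _ _ := rfl
      map_smul' _ _ := rfl }
  map_one' := by ext; simp
  map_mul' g h := by ext; simp [mul_assoc]; rfl

noncomputable def convIndicator (B : Finset G) : EuclideanSpace ℂ G →ₗ[ℂ] EuclideanSpace ℂ G where
  toFun f := WithLp.toLp 2 fun x => ∑ b ∈ B, f (x * b⁻¹)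
  map_add' _ _ := by ext; simp [sum_add_distrib]
  map_smul' _ _ := by ext; simp [mul_sum]

@[simp]
theorem leftTranslation_apply_apply (g : G) (f : EuclideanSpace ℂ G) (x : G) :
    leftTranslation g f x = f (g⁻¹ * x) := rfl

@[simp]
theorem convIndicator_apply (B : Finset G) (f : EuclideanSpace ℂ G) (x : G) :
    convIndicator B f x = ∑ b ∈ B, f (x * b⁻¹) := rfl

theorem commute_convIndicator_leftTranslation (B : Finset G) (g : G) :
    Commute (convIndicator B) (leftTranslation g) := by
  ext f x
  simp [mul_assoc]

theorem eq_apply_one_of_forall_leftTranslation_eq {v : EuclideanSpace ℂ G}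
    (hv : ∀ g, leftTranslation g v = v) (x : G) : v x = v 1 := by
  simpa using (congrArg (· x) (hv x)).symm

variable [Fintype G]

theorem adjoint_convIndicator [DecidableEq G] (B : Finset G) :
    adjoint (convIndicator B) = convIndicator B⁻¹ := by
  refine ((eq_adjoint_iff _ _).2 fun u v => ?_).symm
  simp only [PiLp.inner_apply, RCLike.inner_apply, convIndicator_apply, sum_inv_index, inv_inv,
    map_sum, sum_mul, mul_sum]
  rw [sum_comm, sum_comm (s := univ)]
  exact sum_congr rfl fun b _ => Fintype.sum_equiv (Equiv.mulRight b) _ _ fun x => by simp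

theorem norm_convIndicator_single_sq [DecidableEq G] (B : Finset G) (x : G) :
    ‖convIndicator B (EuclideanSpace.single x 1)‖ ^ 2 = #B := by
  have happly (y : G) : convIndicator B (EuclideanSpace.single x 1) y =
      if x⁻¹ * y ∈ B then 1 else 0 := by
    have hcond (b : G) : y * b⁻¹ = x ↔ x⁻¹ * y = b := by
      rw [mul_inv_eq_iff_eq_mul, inv_mul_eq_iff_eq_mul]
    simp [PiLp.single_apply, hcond]
  rw [EuclideanSpace.norm_sq_eq]
  simp only [happly, apply_ite (‖·‖ ^ 2), norm_one, one_pow, norm_zero, ne_eq,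
    OfNat.ofNat_ne_zero, not_false_eq_true, zero_pow]
  exact (Equiv.sum_comp (Equiv.mulLeft x⁻¹) (fun y => if y ∈ B then (1 : ℝ) else 0)).trans
    (by simp)

end Convolution

theorem mul_norm_convIndicator_sq_le {G : Type} [Group G] [Fintype G] {k : ℕ}
    (hrep : ∀ (V : Type) [AddCommGroup V] [Module ℂ V] [FiniteDimensional ℂ V]
      (ρ : Representation ℂ G V), ρ ≠ 1 → k ≤ finrank ℂ V)
    (B : Finset G) {f : EuclideanSpace ℂ G} (hf : ∑ x, f x = 0) :
    k * ‖convIndicator B f‖ ^ 2 ≤ Fintype.card G * #B * ‖f‖ ^ 2 := by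
  classical
  rcases eq_or_ne f 0 with rfl | hf0
  · simp
  set T := convIndicator B
  set S := adjoint T ∘ₗ T
  obtain ⟨μ, v, hv, hvf, hfμ⟩ :=
    (isSymmetric_adjoint_comp_self T).exists_mem_eigenspace_inner_ne_zero_re_inner_le hf0
  have hμ : 0 ≤ μ := by
    have hv0 : 0 < ‖v‖ := norm_pos_iff.2 fun h => hvf (by simp [h])
    have hTv := T.norm_apply_sq_of_mem_eigenspace_adjoint_comp_self hv
    exact (mul_nonneg_iff_of_pos_right (pow_pos hv0 2)).1 (hTv ▸ sq_nonneg _)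
  have hSg (g : G) : Commute S (leftTranslation g) := by
    refine Commute.mul_left ?_ (commute_convIndicator_leftTranslation B g)
    rw [adjoint_convIndicator]
    exact commute_convIndicator_leftTranslation _ g
  obtain ⟨g, hg⟩ : ∃ g, leftTranslation g v ≠ v := by
    by_contra! hfix
    refine hvf ?_
    simp only [PiLp.inner_apply, RCLike.inner_apply, eq_apply_one_of_forall_leftTranslation_eq hfix]
    rw [← sum_mul, hf, zero_mul]
  have hk : k ≤ finrank ℂ (eigenspace S (μ : ℂ)) :=
    hrep _ _ (Subrepresentation.toRepresentation_ne_one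
      (σ := leftTranslation.eigenspaceSubrep S hSg μ) hv hg)
  have hdim := T.finrank_eigenspace_adjoint_comp_self_mul_le (EuclideanSpace.basisFun G ℂ) μ
  simp only [T, EuclideanSpace.basisFun_apply, adjoint_convIndicator, norm_convIndicator_single_sq,
    card_inv, sum_const, card_univ, nsmul_eq_mul] at hdim
  have hTf : ‖T f‖ ^ 2 = re ⟪f, S f⟫_ℂ := by
    rw [comp_apply, adjoint_inner_right, inner_self_eq_norm_sq_to_K]; norm_cast
  calc (k : ℝ) * ‖T f‖ ^ 2 ≤ k * μ * ‖f‖ ^ 2 := by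
        rw [hTf, mul_assoc]; gcongr
    _ ≤ finrank ℂ (eigenspace S (μ : ℂ)) * μ * ‖f‖ ^ 2 := by gcongr
    _ ≤ Fintype.card G * #B * ‖f‖ ^ 2 := mul_le_mul_of_nonneg_right hdim (sq_nonneg _)

section ProductFree

variable {G : Type*} [Group G] [Fintype G] [DecidableEq G]

noncomputable def balancedIndicator (A : Finset G) : EuclideanSpace ℂ G :=
  WithLp.toLp 2 fun x => (((if x ∈ A then 1 else 0) - #A / Fintype.card G : ℝ) : ℂ)

theorem sum_balancedIndicator (A : Finset G) : ∑ x, balancedIndicator A x = 0 := by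
  have hn : (Fintype.card G : ℝ) ≠ 0 := Nat.cast_ne_zero.2 Fintype.card_ne_zero
  simp only [balancedIndicator, ← Complex.ofReal_sum, sum_sub_distrib, sum_boole, sum_const,
    card_univ, nsmul_eq_mul, filter_mem_eq_inter, univ_inter, mul_div_cancel₀ _ hn, sub_self,
    Complex.ofReal_zero]

theorem norm_balancedIndicator_sq_le (A : Finset G) : ‖balancedIndicator A‖ ^ 2 ≤ #A := by
  set α : ℝ := #A / Fintype.card G
  have hn : (Fintype.card G : ℝ) ≠ 0 := Nat.cast_ne_zero.2 Fintype.card_ne_zero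
  have hterm (x : G) : ‖balancedIndicator A x‖ ^ 2 = (if x ∈ A then 1 - 2 * α else 0) + α ^ 2 := by
    change ‖(((if x ∈ A then 1 else 0) - α : ℝ) : ℂ)‖ ^ 2 = _
    rw [Complex.norm_real, Real.norm_eq_abs, sq_abs]
    split_ifs <;> ring
  rw [EuclideanSpace.norm_sq_eq]
  simp only [hterm, sum_add_distrib, sum_ite_mem, univ_inter, sum_const, card_univ, nsmul_eq_mul]
  have : #A * (1 - 2 * α) + Fintype.card G * α ^ 2 = #A - #A * α := by
    simp only [α]; field_simp; ring
  nlinarith [show 0 ≤ α by positivity]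

theorem convIndicator_balancedIndicator_apply_of_forall_mul_notMem {A B C : Finset G}
    (hABC : ∀ a ∈ A, ∀ b ∈ B, a * b ∉ C) {c : G} (hc : c ∈ C) :
    convIndicator B (balancedIndicator A) c = ((-(#A * #B / Fintype.card G) : ℝ) : ℂ) := by
  have hnotMem (b : G) (hb : b ∈ B) : c * b⁻¹ ∉ A := fun h => hABC _ h b hb (by simpa using hc)
  calc convIndicator B (balancedIndicator A) c = ∑ _b ∈ B, ((-(#A / Fintype.card G) : ℝ) : ℂ) :=
        sum_congr rfl fun b hb => by simp [balancedIndicator, hnotMem b hb]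
    _ = _ := by simp; ring

theorem card_mul_sq_le_norm_convIndicator_balancedIndicator_sq {A B C : Finset G}
    (hABC : ∀ a ∈ A, ∀ b ∈ B, a * b ∉ C) :
    #C * (#A * #B / Fintype.card G : ℝ) ^ 2 ≤ ‖convIndicator B (balancedIndicator A)‖ ^ 2 :=
  calc #C * (#A * #B / Fintype.card G : ℝ) ^ 2
      = ∑ c ∈ C, ‖convIndicator B (balancedIndicator A) c‖ ^ 2 := by
        rw [sum_congr rfl fun c hc => by
          rw [convIndicator_balancedIndicator_apply_of_forall_mul_notMem hABC hc, Complex.norm_real,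
            Real.norm_eq_abs, sq_abs, neg_sq]]
        simp
    _ ≤ ∑ x, ‖convIndicator B (balancedIndicator A) x‖ ^ 2 :=
        sum_le_sum_of_subset_of_nonneg (subset_univ C) fun _ _ _ => sq_nonneg _
    _ = ‖convIndicator B (balancedIndicator A)‖ ^ 2 := (EuclideanSpace.norm_sq_eq _).symm

end ProductFree

theorem exists_mul_eq_of_card_pow_three_lt {G : Type} [Group G] [Fintype G] {k : ℕ}
    (hrep : ∀ (V : Type) [AddCommGroup V] [Module ℂ V] [FiniteDimensional ℂ V]
      (ρ : Representation ℂ G V), ρ ≠ 1 → k ≤ finrank ℂ V)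
    (A B C : Finset G) (hABC : Fintype.card G ^ 3 < k * (#A * #B * #C)) :
    ∃ a ∈ A, ∃ b ∈ B, ∃ c ∈ C, a * b = c := by
  classical
  by_contra! hfree
  have hlower := card_mul_sq_le_norm_convIndicator_balancedIndicator_sq
    fun a ha b hb hc => hfree a ha b hb _ hc rfl
  have hspectral := mul_norm_convIndicator_sq_le hrep B (sum_balancedIndicator A)
  have hupper := norm_balancedIndicator_sq_le A
  have hAB : 0 < (#A * #B : ℝ) := by
    have : 0 < #A * #B := Nat.pos_of_ne_zero fun h => by simp [h] at hABC
    exact_mod_cast this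
  have hn : 0 < (Fintype.card G : ℝ) := by exact_mod_cast Fintype.card_pos
  have hABC_real : (Fintype.card G : ℝ) ^ 3 < k * (#A * #B * #C) := by exact_mod_cast hABC
  have hchain : (k : ℝ) * (#C * (#A * #B / Fintype.card G) ^ 2) ≤
      Fintype.card G * #B * #A := by
    calc (k : ℝ) * (#C * (#A * #B / Fintype.card G) ^ 2)
        ≤ k * ‖convIndicator B (balancedIndicator A)‖ ^ 2 := by gcongr
      _ ≤ Fintype.card G * #B * ‖balancedIndicator A‖ ^ 2 := hspectral
      _ ≤ Fintype.card G * #B * #A := by gcongr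
  rw [div_pow, mul_div_assoc', mul_div_assoc', div_le_iff₀ (by positivity)] at hchain
  nlinarith

theorem statement0_general {G : Type} [Group G] [Fintype G] (n k : ℕ)
    (hn : Fintype.card G = n)
    (hrep : ∀ (V : Type) [AddCommGroup V] [Module ℂ V] [FiniteDimensional ℂ V]
      (ρ : Representation ℂ G V), ρ ≠ 1 → k ≤ Module.finrank ℂ V)
    (A B C : Finset G)
    (hABC : n ^ 3 < k * (A.card * B.card * C.card)) :
    ∃ a ∈ A, ∃ b ∈ B, ∃ c ∈ C, a * b = c := by
  subst hn
  exact exists_mul_eq_of_card_pow_three_lt hrep A B C hABC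

/-- **Gowers' product theorem** (Proposition 0): if every nontrivial complex
representation of the finite group `G` of order `n` has degree at least `k`, and
`A`, `B`, `C` are subsets with `|A|·|B|·|C| > n³/k`, then `a·b = c` has a solution. -/
theorem statement0 {G : Type} [Group G] [Fintype G] (n k : ℕ)
    (hn : Fintype.card G = n) (hk : 1 ≤ k)
    (hrep : ∀ (V : Type) [AddCommGroup V] [Module ℂ V] [FiniteDimensional ℂ V]
      (ρ : Representation ℂ G V), ρ ≠ 1 → k ≤ Module.finrank ℂ V)
    (A B C : Finset G)
    (hABC : n ^ 3 < k * (A.card * B.card * C.card)) :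
    ∃ a ∈ A, ∃ b ∈ B, ∃ c ∈ C, a * b = c :=
  statement0_general n k hn hrep A B C hABC
end

section
/- For every n ≥ 2 there is a constant C = C(n) such that for every finite field F of cardinality q, the number of elements of SL(n, F) that are not regular semisimple is at most (C/q)·|SL(n, F)|; equivalently, the number of regular semisimple elements of SL(n, F) is at least (1 − C/q)·|SL(n, F)|. -/
/-!
If the characteristic polynomial `χ` of `M ∈ Mₙ(F)` is not squarefree, it is inseparable, so the
resultant `Res(χ, χ')` vanishes at the entries of `M`. This resultant is a polynomial in the
`n²` entries, defined over `ℤ` (so its degree `D` depends only on `n`) and nonzero over every field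
(a diagonal matrix with distinct entries in an algebraic closure is separable). Schwartz–Zippel
then bounds the bad matrices by `D q^(n² - 1)`. Scaling by `Fˣ` preserves badness and
`(u, g) ↦ u • g` is at most `n`-to-one on `Fˣ × SL(n, F)` (since `uⁿ = det (u • g)`), so
`(q - 1) · #bad(SL) ≤ n D q^(n² - 1)`, while `(q - 1) |SL| = |GL| ≥ q^(n²) / 2ⁿ`.
-/

/-- An element of `SL(n, F)` is regular semisimple iff its characteristic polynomial
is squarefree, i.e. it has `n` distinct eigenvalues in an algebraic closure of `F`. -/
def IsRegularSemisimple {n : ℕ} {F : Type} [Field F]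
    (g : Matrix.SpecialLinearGroup (Fin n) F) : Prop :=
  Squarefree (Matrix.charpoly (g : Matrix (Fin n) (Fin n) F))

open Polynomial

namespace MvPolynomial

theorem IsHomogeneous.eval_smul {σ R : Type*} [CommRing R] {m : ℕ} {φ : MvPolynomial σ R}
    (hφ : φ.IsHomogeneous m) (r : R) (x : σ → R) : eval (r • x) φ = r ^ m * eval x φ := by
  rw [φ.as_sum, map_sum, map_sum, Finset.mul_sum]
  refine Finset.sum_congr rfl fun d hd => ?_
  rw [← hφ (mem_support_iff.mp hd)]
  simp only [eval_monomial, Pi.smul_apply, smul_eq_mul, mul_pow, Finsupp.prod_mul]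
  simp [Finsupp.weight_apply, Finsupp.prod, Finsupp.sum, Finset.prod_pow_eq_pow_sum]
  ring

theorem totalDegree_map_le {σ R S : Type*} [CommRing R] [CommRing S] (f : R →+* S)
    (p : MvPolynomial σ R) : (map f p).totalDegree ≤ p.totalDegree :=
  Finset.sup_mono (support_map_subset f p)

variable {σ R : Type*} [CommRing R] [IsDomain R] [Fintype R]

theorem card_zeros_mul_card_le_of_fin {N : ℕ} {p : MvPolynomial (Fin N) R} (hp : p ≠ 0) :
    Nat.card {x : Fin N → R // eval x p = 0} * Fintype.card R ≤
      p.totalDegree * Fintype.card R ^ N := by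
  classical
  have h := schwartz_zippel_totalDegree hp Finset.univ
  rw [Fintype.piFinset_univ, Finset.card_univ,
    div_le_div_iff₀ (by positivity) (by positivity)] at h
  rw [Nat.card_eq_fintype_card, Fintype.card_subtype]
  exact_mod_cast h

theorem card_zeros_mul_card_le [Fintype σ] {p : MvPolynomial σ R} (hp : p ≠ 0) :
    Nat.card {x : σ → R // eval x p = 0} * Fintype.card R ≤
      p.totalDegree * Fintype.card R ^ Fintype.card σ := by
  let e := Fintype.equivFin σ
  have hzeros : {x : σ → R // eval x p = 0} ≃
      {y : Fin (Fintype.card σ) → R // eval y (rename e p) = 0} :=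
    (e.arrowCongr (Equiv.refl R)).subtypeEquiv fun x => by simp [eval_rename, Function.comp_def]
  rw [Nat.card_congr hzeros]
  have hp' : rename e p ≠ 0 := (rename_injective _ e.injective).ne_iff' (map_zero _) |>.mpr hp
  exact (card_zeros_mul_card_le_of_fin hp').trans
    (Nat.mul_le_mul_right _ (totalDegree_rename_le _ _))

end MvPolynomial

namespace Polynomial

theorem squarefree_of_squarefree_scaleRoots {K : Type*} [Field K] {p : K[X]} {r : K}
    (h : Squarefree (p.scaleRoots r)) : Squarefree p := by
  intro x hx
  have hunit := h (x.scaleRoots r) (by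
    rw [← mul_scaleRoots_of_noZeroDivisors]; exact scaleRoots_dvd _ _ hx)
  rw [isUnit_iff_degree_eq_zero, degree_scaleRoots] at hunit
  exact isUnit_iff_degree_eq_zero.mpr hunit

theorem card_nthRootsFinset_le {R : Type*} [CommRing R] [IsDomain R] (n : ℕ) (a : R) :
    (nthRootsFinset n a).card ≤ n := by
  classical
  rw [nthRootsFinset_def]
  exact (Multiset.toFinset_card_le _).trans (card_nthRoots n a)

theorem Monic.resultant_natDegree_of_natDegree_le {R : Type*} [CommRing R] {f g : R[X]}
    (hf : f.Monic) {k : ℕ} (hg : g.natDegree ≤ k) :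
    resultant f g f.natDegree k = resultant f g := by
  obtain ⟨j, rfl⟩ := Nat.exists_eq_add_of_le hg
  rw [resultant_add_right_deg _ _ _ _ j le_rfl, hf.coeff_natDegree, one_pow, one_mul]

theorem Monic.resultant_derivative_eq_zero_iff {K : Type*} [Field K] {f : K[X]} (hf : f.Monic) :
    resultant f (derivative f) f.natDegree (f.natDegree - 1) = 0 ↔ ¬ f.Separable := by
  rw [hf.resultant_natDegree_of_natDegree_le (natDegree_derivative_le f), resultant_eq_zero_iff,
    Separable]
  simp [hf.ne_zero]

end Polynomial

namespace Matrix

section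

variable {n : Type*} [Fintype n] [DecidableEq n]

theorem charpoly_smul {R : Type*} [CommRing R] (r : R) (M : Matrix n n R) :
    (r • M).charpoly = M.charpoly.scaleRoots r := by
  nontriviality R
  ext i
  rw [coeff_scaleRoots, charpoly_natDegree_eq_dim]
  rcases le_or_gt i (Fintype.card n) with hi | hi
  · have hhom := charpoly.univ_coeff_isHomogeneous R n i (Fintype.card n - i) (by omega)
    have := hhom.eval_smul r (fun ij => M ij.1 ij.2)
    rw [MvPolynomial.eval, charpoly.univ_coeff_eval₂Hom, MvPolynomial.eval,
      charpoly.univ_coeff_eval₂Hom] at this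
    rw [mul_comm]
    exact this
  · rw [coeff_eq_zero_of_natDegree_lt, coeff_eq_zero_of_natDegree_lt, zero_mul] <;>
      rwa [charpoly_natDegree_eq_dim]

theorem resultant_derivative_charpoly_eq_zero_iff {K : Type*} [Field K] (M : Matrix n n K) :
    resultant M.charpoly (derivative M.charpoly) (Fintype.card n) (Fintype.card n - 1) = 0 ↔
      ¬ M.charpoly.Separable := by
  rw [← M.charpoly_natDegree_eq_dim, M.charpoly_monic.resultant_derivative_eq_zero_iff]

end

namespace charpoly

variable {R S : Type*} [CommRing R] [CommRing S] (n : Type*) [Fintype n] [DecidableEq n]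

variable (R) in
/-- Up to sign, the discriminant of the universal characteristic polynomial. The Sylvester sizes
are fixed at `n` and `n - 1` instead of being read off the degrees, so that it commutes with
specialisation. -/
noncomputable def univResultantDeriv : MvPolynomial (n × n) R :=
  resultant (univ R n) (derivative (univ R n)) (Fintype.card n) (Fintype.card n - 1)

theorem eval₂Hom_univResultantDeriv (f : R →+* S) (M : n × n → S) :
    MvPolynomial.eval₂Hom f M (univResultantDeriv R n) =
      resultant (of M.curry).charpoly (derivative (of M.curry).charpoly)
        (Fintype.card n) (Fintype.card n - 1) := by
  rw [univResultantDeriv, ← resultant_map_map, ← derivative_map, univ_map_eval₂Hom]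

theorem map_univResultantDeriv (f : R →+* S) :
    MvPolynomial.map f (univResultantDeriv R n) = univResultantDeriv S n := by
  rw [univResultantDeriv, ← resultant_map_map, ← derivative_map, univ_map_map]
  rfl

theorem univResultantDeriv_ne_zero (K : Type*) [Field K] : univResultantDeriv K n ≠ 0 := by
  let L := AlgebraicClosure K
  let a : n ↪ L := (Fintype.equivFin n).toEmbedding.trans
    (Fin.valEmbedding.trans (Infinite.natEmbedding L))
  have hsep : (diagonal a).charpoly.Separable := by
    rw [charpoly_diagonal]
    exact separable_prod_X_sub_C_iff.mpr a.injective
  intro h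
  have := eval₂Hom_univResultantDeriv n (algebraMap K L) (fun ij => diagonal a ij.1 ij.2)
  rw [h, map_zero, eq_comm] at this
  exact (resultant_derivative_charpoly_eq_zero_iff _).mp this hsep

end charpoly

open charpoly in
theorem card_not_squarefree_charpoly_mul_card_le (K n : Type*) [Field K] [Fintype K]
    [Fintype n] [DecidableEq n] :
    Nat.card {M : Matrix n n K // ¬ Squarefree M.charpoly} * Fintype.card K ≤
      (univResultantDeriv ℤ n).totalDegree *
        Fintype.card K ^ (Fintype.card n * Fintype.card n) := by
  let entries : {M : Matrix n n K // ¬ Squarefree M.charpoly} →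
      {x : n × n → K // MvPolynomial.eval x (univResultantDeriv K n) = 0} :=
    fun M => ⟨fun ij => M.1 ij.1 ij.2, by
      rw [MvPolynomial.eval, eval₂Hom_univResultantDeriv,
        resultant_derivative_charpoly_eq_zero_iff]
      exact fun hsep => M.2 hsep.squarefree⟩
  have hinj : Function.Injective entries := fun M N h => by
    ext i j
    exact congrFun (congrArg Subtype.val h) (i, j)
  calc _ ≤ Nat.card {x : n × n → K // MvPolynomial.eval x (univResultantDeriv K n) = 0} *
        Fintype.card K := Nat.mul_le_mul_right _ (Nat.card_le_card_of_injective _ hinj)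
    _ ≤ (univResultantDeriv K n).totalDegree * Fintype.card K ^ Fintype.card (n × n) :=
        MvPolynomial.card_zeros_mul_card_le (univResultantDeriv_ne_zero n K)
    _ ≤ _ := by
        rw [Fintype.card_prod, ← map_univResultantDeriv n (Int.castRingHom K)]
        exact Nat.mul_le_mul_right _ (MvPolynomial.totalDegree_map_le _ _)

theorem card_units_mul_card_SL_not_squarefree_charpoly_le (K n : Type*) [Field K] [Fintype K]
    [Fintype n] [DecidableEq n] [Nonempty n] :
    Nat.card Kˣ *
        Nat.card {g : SpecialLinearGroup n K // ¬ Squarefree (g : Matrix n n K).charpoly} ≤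
      Fintype.card n * Nat.card {M : Matrix n n K // ¬ Squarefree M.charpoly} := by
  classical
  let smulBad : Kˣ × {g : SpecialLinearGroup n K // ¬ Squarefree (g : Matrix n n K).charpoly} →
      {M : Matrix n n K // ¬ Squarefree M.charpoly} := fun p =>
    ⟨(p.1 : K) • (p.2.1 : Matrix n n K), fun h =>
      p.2.2 (squarefree_of_squarefree_scaleRoots (by rwa [← charpoly_smul]))⟩
  have hfiber : ∀ M ∈ (Finset.univ : Finset {M : Matrix n n K // ¬ Squarefree M.charpoly}),
      (Finset.univ.filter fun p => smulBad p = M).card ≤ Fintype.card n := by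
    intro M _
    refine le_trans (Finset.card_le_card_of_injOn (fun p => (p.1 : K))
      (t := nthRootsFinset (Fintype.card n) M.1.det) ?_ ?_) (card_nthRootsFinset_le _ _)
    · intro p hp
      rw [Finset.coe_filter] at hp
      rw [Finset.mem_coe, mem_nthRootsFinset Fintype.card_pos, ← hp.2]
      simp [smulBad]
    · intro p hp p' hp' hpp'
      rw [Finset.coe_filter] at hp hp'
      have hu : p.1 = p'.1 := Units.ext hpp'
      have hg : (p.2.1 : Matrix n n K) = p'.2.1 := by
        have := congrArg Subtype.val (hp.2.trans hp'.2.symm)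
        simpa [smulBad, hu, smul_right_inj (Units.ne_zero p'.1)] using this
      exact Prod.ext hu (Subtype.ext (Subtype.ext hg))
  have := Finset.card_le_mul_card_image_of_maps_to (f := smulBad) (s := Finset.univ)
    (t := Finset.univ) (fun _ _ => Finset.mem_univ _) _ hfiber
  simpa [Nat.card_eq_fintype_card] using this

theorem card_GL_eq_card_units_mul_card_SL (n R : Type*) [Fintype n] [DecidableEq n] [Nonempty n]
    [CommRing R] :
    Nat.card (GL n R) = Nat.card Rˣ * Nat.card (SpecialLinearGroup n R) := by
  have hker : (GeneralLinearGroup.det : GL n R →* Rˣ).ker = SpecialLinearGroup.toGL.range := by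
    ext g
    refine ⟨fun hg => ⟨⟨g, by simpa [Units.ext_iff] using hg⟩, Units.ext rfl⟩, ?_⟩
    rintro ⟨s, rfl⟩
    simp
  rw [← GeneralLinearGroup.det.ker.card_mul_index, Subgroup.index_ker,
    MonoidHom.range_eq_top.mpr GeneralLinearGroup.det_surjective, Subgroup.card_top, hker,
    mul_comm, Nat.card_congr (MonoidHom.ofInjective SpecialLinearGroup.toGL_injective).toEquiv.symm]

theorem pow_le_two_pow_mul_card_GL (F : Type*) [Field F] [Fintype F] (m : ℕ) :
    Fintype.card F ^ (m * m) ≤ 2 ^ m * Nat.card (GL (Fin m) F) := by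
  set q := Fintype.card F
  have hq : 2 ≤ q := Fintype.one_lt_card
  have hfactor : ∀ i : Fin m, q ^ m ≤ 2 * (q ^ m - q ^ (i : ℕ)) := fun i => by
    have : 2 * q ^ (i : ℕ) ≤ q ^ m := calc
      2 * q ^ (i : ℕ) ≤ q ^ (i + 1 : ℕ) := by rw [pow_succ']; exact Nat.mul_le_mul_right _ hq
      _ ≤ q ^ m := Nat.pow_le_pow_right (by omega) i.isLt
    omega
  calc q ^ (m * m) = ∏ _i : Fin m, q ^ m := by simp [← pow_mul]
    _ ≤ ∏ i : Fin m, 2 * (q ^ m - q ^ (i : ℕ)) := Finset.prod_le_prod' fun i _ => hfactor i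
    _ = 2 ^ m * Nat.card (GL (Fin m) F) := by simp [Finset.prod_mul_distrib, card_GL_field, q]

end Matrix

open Matrix Matrix.charpoly in
/-- **Lemma on regular semisimple elements**: for every `n ≥ 2` there is a constant
`C = C(n)` such that for every finite field `F` of cardinality `q`, the number of
elements of `SL(n, F)` that are not regular semisimple is at most `(C/q)·|SL(n, F)|`. -/
theorem statement5 (n : ℕ) (hn : 2 ≤ n) :
    ∃ C : ℝ, 0 < C ∧
      ∀ (q : ℕ) (F : Type) [Field F] [Fintype F], Fintype.card F = q →
        (Nat.card {g : Matrix.SpecialLinearGroup (Fin n) F // ¬ IsRegularSemisimple g} : ℝ)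
          ≤ C / (q : ℝ) * (Nat.card (Matrix.SpecialLinearGroup (Fin n) F) : ℝ) := by
  have : Nonempty (Fin n) := ⟨⟨0, by omega⟩⟩
  have hn0 : (0 : ℝ) < n := by exact_mod_cast (by omega : 0 < n)
  set D := (univResultantDeriv ℤ (Fin n)).totalDegree
  refine ⟨n * 2 ^ n * (D + 1), by positivity, ?_⟩
  rintro _ F _ _ rfl
  unfold IsRegularSemisimple
  set q := Fintype.card F
  set T := Nat.card
    {g : SpecialLinearGroup (Fin n) F // ¬ Squarefree (g : Matrix (Fin n) (Fin n) F).charpoly}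
  set B := Nat.card {M : Matrix (Fin n) (Fin n) F // ¬ Squarefree M.charpoly}
  set S := Nat.card (SpecialLinearGroup (Fin n) F)
  have hbad : B * q ≤ D * q ^ (n * n) := by
    simpa using card_not_squarefree_charpoly_mul_card_le F (Fin n)
  have hscale : Nat.card Fˣ * T ≤ n * B := by
    simpa using card_units_mul_card_SL_not_squarefree_charpoly_le F (Fin n)
  have hGL : q ^ (n * n) ≤ 2 ^ n * (Nat.card Fˣ * S) := by
    simpa [card_GL_eq_card_units_mul_card_SL] using pow_le_two_pow_mul_card_GL F n
  have key : Nat.card Fˣ * (T * q) ≤ Nat.card Fˣ * (n * 2 ^ n * (D + 1) * S) := calc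
    Nat.card Fˣ * (T * q) = Nat.card Fˣ * T * q := by ring
    _ ≤ n * (B * q) := by rw [← mul_assoc]; exact Nat.mul_le_mul_right _ hscale
    _ ≤ n * (D * q ^ (n * n)) := Nat.mul_le_mul_left _ hbad
    _ ≤ n * ((D + 1) * (2 ^ n * (Nat.card Fˣ * S))) := by gcongr; omega
    _ = Nat.card Fˣ * (n * 2 ^ n * (D + 1) * S) := by ring
  have hq : (0 : ℝ) < q := by exact_mod_cast Fintype.card_pos
  rw [div_mul_eq_mul_div, le_div_iff₀ hq]
  exact_mod_cast Nat.le_of_mul_le_mul_left key Nat.card_pos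
end

section
/- Let p be an odd prime and let P be a finite p-group of symplectic type that has exponent p and order p^{2m+1}. Let C = C_{Aut(P)}(Z(P)) be the group of automorphisms of P that fix the center Z(P) elementwise. Then C can be embedded in the symmetric group Sym(p^{2m}), i.e., there is an injective group homomorphism C → Sym(p^{2m}). -/
/-!
The centre `Z` of `P` is characteristic and abelian, hence of order `p`. With `K` the second
centre, `C_P(K) ∩ K` is characteristic abelian, hence equal to `Z`, which forces `C_P(K) = Z`;
commutators with generators `x₁, …, x_k` of `K` modulo `Z` then embed `P/Z` into `Z^k`, while
`p^(k+1) ≤ |K|`, so `K = P` and `P` has class two. Identifying `Z` with `ZMod p`, commutators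
give an alternating form `β` on `P`, and `C_{Aut(P)}(Z(P))` acts by precomposition on the set
`Ω` of maps `f : P → ZMod p` with `f (a b) = f a + f b + β a b` that are twice the
identification on `Z`. Such maps extend from a subgroup `H ≥ Z` to `H ⟨x⟩` with arbitrary value
at `x`, so `Ω` separates the points of `P` (this uses `2 ≠ 0`, i.e. `p` odd) and the action is
faithful; and an element of `Ω` is determined by its values on at most `2m` elements generating
`P` modulo `Z`, so `|Ω| ≤ p^(2m)`.
-/

/-- The subgroup `C_{Aut(P)}(Z(P))` of `Aut(P)` consisting of the automorphisms of `P`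
fixing the center of `P` elementwise. -/
def centerFixingAuts (P : Type) [Group P] : Subgroup (MulAut P) where
  carrier := {φ : MulAut P | ∀ z ∈ Subgroup.center P, φ z = z}
  one_mem' := fun _ _ => rfl
  mul_mem' := by
    intro a b ha hb z hz
    simp only [MulAut.mul_apply, hb z hz, ha z hz]
  inv_mem' := by
    intro a ha z hz
    have h := ha z hz
    show a⁻¹ z = z
    calc a⁻¹ z = a⁻¹ (a z) := by rw [h]
      _ = z := by simp

open Subgroup commutatorElement

section Commutator

variable {G : Type*} [Group G]

theorem commutatorElement_mul_left_of_mem_center {a b c : G} (h : ⁅b, c⁆ ∈ center G) :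
    ⁅a * b, c⁆ = ⁅a, c⁆ * ⁅b, c⁆ := by
  have h' : ⁅a * b, c⁆ = a * ⁅b, c⁆ * a⁻¹ * ⁅a, c⁆ := by
    simp only [commutatorElement_def]; group
  rw [h', mem_center_iff.mp h a, mul_inv_cancel_right, mem_center_iff.mp h]

theorem commutatorElement_mul_right_of_mem_center {a b c : G} (h : ⁅a, c⁆ ∈ center G) :
    ⁅a, b * c⁆ = ⁅a, b⁆ * ⁅a, c⁆ := by
  have h' : ⁅a, b * c⁆ = ⁅a, b⁆ * (b * ⁅a, c⁆ * b⁻¹) := by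
    simp only [commutatorElement_def]; group
  rw [h', mem_center_iff.mp h b, mul_inv_cancel_right]

theorem mul_pow_mul_mul_pow_of_mem_center {a b x : G} {i j : ℕ} (h : ⁅x ^ i, b⁆ ∈ center G) :
    a * x ^ i * (b * x ^ j) = a * b * ⁅x ^ i, b⁆ * x ^ (i + j) := by
  rw [mul_assoc a b, mem_center_iff.mp h b, pow_add]
  simp only [commutatorElement_def]
  group

theorem normal_of_center_le (hG : ∀ a b : G, ⁅a, b⁆ ∈ center G) {H : Subgroup G}
    (hZH : center G ≤ H) : H.Normal where
  conj_mem n hn g := by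
    rw [show g * n * g⁻¹ = ⁅g, n⁆ * n by simp only [commutatorElement_def]; group]
    exact H.mul_mem (hZH (hG g n)) hn

theorem inf_upperCentralSeries_le_center {N : Subgroup G} [N.Normal]
    (hN : N ⊓ Subgroup.upperCentralSeries G 2 ≤ center G) (n : ℕ) :
    N ⊓ Subgroup.upperCentralSeries G n ≤ center G := by
  induction n with
  | zero => simp
  | succ n ih =>
    rintro c ⟨hcN, hc⟩
    refine hN ⟨hcN, Subgroup.mem_upperCentralSeries_succ_iff.mpr fun y => ?_⟩
    rw [Subgroup.upperCentralSeries_one]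
    refine ih ⟨?_, Subgroup.mem_upperCentralSeries_succ_iff.mp hc y⟩
    rw [commutatorElement_def, mul_assoc c, mul_assoc c]
    exact N.mul_mem hcN (Normal.conj_mem inferInstance _ (N.inv_mem hcN) y)

theorem le_center_of_inf_upperCentralSeries_two_le [Group.IsNilpotent G] {N : Subgroup G}
    [N.Normal] (hN : N ⊓ Subgroup.upperCentralSeries G 2 ≤ center G) : N ≤ center G := by
  simpa using inf_upperCentralSeries_le_center hN (Group.nilpotencyClass G)

end Commutator

section PGroup

variable {G : Type*} [Group G] {p : ℕ}

theorem exists_mul_pow_eq_of_mem_sup_zpowers [Finite G] {H : Subgroup G} [H.Normal] {x u : G}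
    (hu : u ∈ H ⊔ zpowers x) : ∃ a ∈ H, ∃ j : ℕ, a * x ^ j = u := by
  rw [← SetLike.mem_coe, normal_mul, Set.mem_mul] at hu
  obtain ⟨a, ha, y, hy, rfl⟩ := hu
  obtain ⟨j, rfl⟩ := mem_powers_iff_mem_zpowers.mpr hy
  exact ⟨a, ha, j, rfl⟩

theorem eq_and_natCast_eq_of_mul_pow_eq_mul_pow [Fact p.Prime] (hexp : ∀ g : G, g ^ p = 1)
    {H : Subgroup G} {x : G} (hx : x ∉ H) {a b : G} (ha : a ∈ H) (hb : b ∈ H) {i j : ℕ}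
    (h : a * x ^ i = b * x ^ j) : a = b ∧ (i : ZMod p) = j := by
  have hx1 : x ≠ 1 := fun h => hx (h ▸ H.one_mem)
  have hxp : orderOf x = p := orderOf_eq_prime (hexp x) hx1
  have : Finite (zpowers x) :=
    Nat.finite_of_card_ne_zero (by rw [Nat.card_zpowers, hxp]; exact (Fact.out : p.Prime).ne_zero)
  have hxi : x ^ i = x ^ j := by
    rw [← mul_inv_eq_one]
    by_contra hy
    have hyH : x ^ i * (x ^ j)⁻¹ ∈ H := by
      rw [show x ^ i * (x ^ j)⁻¹ = a⁻¹ * b by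
        rw [mul_inv_eq_iff_eq_mul, mul_assoc, ← h, inv_mul_cancel_left]]
      exact H.mul_mem (H.inv_mem ha) hb
    -- a nontrivial element of `zpowers x` generates it, as `x` has prime order
    have hzp : zpowers (x ^ i * (x ^ j)⁻¹) = zpowers x := by
      refine eq_of_le_of_card_ge (zpowers_le.mpr (mul_mem (npow_mem_zpowers x i)
        (inv_mem (npow_mem_zpowers x j)))) ?_
      rw [Nat.card_zpowers, Nat.card_zpowers, hxp, orderOf_eq_prime (hexp _) hy]
    exact hx (zpowers_le.mp (hzp ▸ zpowers_le.mpr hyH))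
  refine ⟨mul_right_cancel (h.trans (by rw [hxi])), (ZMod.natCast_eq_natCast_iff _ _ _).mpr ?_⟩
  rwa [pow_eq_pow_iff_modEq, hxp] at hxi

variable [Finite G] [Fact p.Prime]

theorem IsPGroup.card_mul_le_card_of_lt (hG : IsPGroup p G) {H K : Subgroup G} (hHK : H < K) :
    Nat.card H * p ≤ Nat.card K := by
  obtain ⟨a, ha⟩ := IsPGroup.iff_card.mp (hG.to_subgroup H)
  obtain ⟨b, hb⟩ := IsPGroup.iff_card.mp (hG.to_subgroup K)
  have hlt : Nat.card H < Nat.card K := by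
    by_contra! h
    exact hHK.ne (eq_of_le_of_card_ge hHK.le h)
  rw [ha, hb] at hlt ⊢
  rw [← pow_succ]
  exact Nat.pow_le_pow_right (Fact.out : p.Prime).pos
    ((Nat.pow_lt_pow_iff_right (Fact.out : p.Prime).one_lt).mp hlt)

theorem IsPGroup.exists_sup_closure_eq (hG : IsPGroup p G) {H N : Subgroup G} (hHN : H ≤ N) :
    ∃ (k : ℕ) (xs : Fin k → G), H ⊔ closure (Set.range xs) = N ∧
      Nat.card H * p ^ k ≤ Nat.card N := by
  induction H using WellFoundedGT.induction with
  | ind H ih =>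
  obtain rfl | hlt := hHN.eq_or_lt
  · exact ⟨0, Fin.elim0, by simp, by simp⟩
  obtain ⟨x, hxN, hxH⟩ := SetLike.exists_of_lt hlt
  have hH' : H < H ⊔ zpowers x := left_lt_sup.mpr fun h => hxH (h (mem_zpowers x))
  obtain ⟨k, xs, hxs, hcard⟩ := ih _ hH' (sup_le hHN (zpowers_le.mpr hxN))
  refine ⟨k + 1, Fin.cons x xs, ?_, ?_⟩
  · rw [Fin.range_cons, Set.insert_eq, Subgroup.closure_union, ← zpowers_eq_closure,
      ← sup_assoc, hxs]
  · calc Nat.card H * p ^ (k + 1) = Nat.card H * p * p ^ k := by ring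
      _ ≤ Nat.card (H ⊔ zpowers x : Subgroup G) * p ^ k := by
        gcongr; exact hG.card_mul_le_card_of_lt hH'
      _ ≤ Nat.card N := hcard

end PGroup

def IsSymplecticType (G : Type*) [Group G] : Prop :=
  ∀ H : Subgroup G, H.Characteristic → (∀ x y : H, x * y = y * x) → IsCyclic H

namespace IsSymplecticType

variable {G : Type*} [Group G] {p : ℕ} (hP : IsSymplecticType G) (hexp : ∀ g : G, g ^ p = 1)
include hP hexp

theorem card_dvd {H : Subgroup G} (hH : H.Characteristic) (hcomm : ∀ x y : H, x * y = y * x) :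
    Nat.card H ∣ p := by
  have := hP H hH hcomm
  rw [← IsCyclic.exponent_eq_card]
  exact Monoid.exponent_dvd_of_forall_pow_eq_one fun h => Subtype.ext (hexp h)

variable [Finite G] [Nontrivial G] [Fact p.Prime] (hG : IsPGroup p G)
include hG

theorem card_center : Nat.card (center G) = p := by
  have hdvd := hP.card_dvd hexp inferInstance fun x y => Subtype.ext (mem_center_iff.mp y.2 x)
  have := hG.center_nontrivial
  exact ((Fact.out : p.Prime).eq_one_or_self_of_dvd _ hdvd).resolve_left Finite.one_lt_card.ne'

theorem centralizer_le_center :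
    centralizer (Subgroup.upperCentralSeries G 2 : Set G) ≤ center G := by
  have := hG.isNilpotent
  apply le_center_of_inf_upperCentralSeries_two_le
  set K := Subgroup.upperCentralSeries G 2
  have hZK : center G ≤ K := by
    rw [← Subgroup.upperCentralSeries_one]; exact Subgroup.upperCentralSeries_mono G one_le_two
  have hZ : center G = centralizer K ⊓ K := by
    apply eq_of_le_of_card_ge (le_inf (center_le_centralizer _) hZK)
    rw [hP.card_center hexp hG]
    exact Nat.le_of_dvd (Fact.out : p.Prime).pos <| hP.card_dvd hexp inferInstance
      fun x y => Subtype.ext (mem_centralizer_iff.mp x.2.1 y y.2.2).symm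
  exact hZ.ge

theorem commutatorElement_mem_center (a b : G) : ⁅a, b⁆ ∈ center G := by
  set K := Subgroup.upperCentralSeries G 2
  have hK (y : G) (hy : y ∈ K) (x : G) : ⁅y, x⁆ ∈ center G := by
    rw [← Subgroup.upperCentralSeries_one]; exact Subgroup.mem_upperCentralSeries_succ_iff.mp hy x
  obtain ⟨k, xs, hxs, hcard⟩ : ∃ (k : ℕ) (xs : Fin k → G),
      center G ⊔ closure (Set.range xs) = K ∧ Nat.card (center G) * p ^ k ≤ Nat.card K :=
    hG.exists_sup_closure_eq <| (Subgroup.upperCentralSeries_one G).symm.trans_le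
      (Subgroup.upperCentralSeries_mono G one_le_two)
  have hxsK (i : Fin k) : xs i ∈ K := hxs ▸ mem_sup_right (subset_closure (Set.mem_range_self i))
  let Ψ : G →* (Fin k → center G) := MonoidHom.mk' (fun x i => ⟨⁅xs i, x⁆, hK _ (hxsK i) x⟩)
    fun x y => funext fun i => Subtype.ext <|
      commutatorElement_mul_right_of_mem_center (hK _ (hxsK i) y)
  have hker : Ψ.ker ≤ center G := by
    refine le_trans (fun x hx => mem_centralizer_iff.mpr fun y hy => ?_)
      (hP.centralizer_le_center hexp hG)
    suffices K ≤ centralizer {x} from mem_centralizer_singleton_iff.mp (this hy)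
    rw [← hxs]
    refine sup_le (center_le_centralizer _) (closure_le _ |>.mpr ?_)
    rintro _ ⟨i, rfl⟩
    exact mem_centralizer_singleton_iff.mpr <| commutatorElement_eq_one_iff_mul_comm.mp <|
      congrArg Subtype.val (congrFun hx i)
  have hKtop : K = ⊤ := by
    refine eq_top_of_le_card _ ?_
    calc Nat.card G = Nat.card Ψ.ker * Nat.card Ψ.range := by
          rw [← index_ker, card_mul_index]
      _ ≤ Nat.card (center G) * Nat.card (Fin k → center G) := by
        gcongr
        · exact card_le_of_le hker
        · exact card_le_card_group _
      _ = Nat.card (center G) * p ^ k := by simp [Nat.card_pi, hP.card_center hexp hG]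
      _ ≤ Nat.card K := hcard
  exact hK a (hKtop ▸ mem_top a) b

end IsSymplecticType

section QuadraticRefinement

variable {G : Type*} [Group G] {p : ℕ}
variable (hG : ∀ a b : G, ⁅a, b⁆ ∈ center G) (ι : center G →* Multiplicative (ZMod p))

def commutatorForm (a b : G) : ZMod p := (ι ⟨⁅a, b⁆, hG a b⟩).toAdd

variable {hG ι}

theorem commutatorForm_mul_left (a b c : G) :
    commutatorForm hG ι (a * b) c = commutatorForm hG ι a c + commutatorForm hG ι b c := by
  rw [commutatorForm, show (⟨⁅a * b, c⁆, hG _ _⟩ : center G) = ⟨⁅a, c⁆, hG a c⟩ * ⟨⁅b, c⁆, hG b c⟩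
    from Subtype.ext (commutatorElement_mul_left_of_mem_center (hG b c)), map_mul, toAdd_mul]
  rfl

theorem commutatorForm_swap (a b : G) : commutatorForm hG ι b a = -commutatorForm hG ι a b := by
  rw [commutatorForm, show (⟨⁅b, a⁆, hG _ _⟩ : center G) = (⟨⁅a, b⁆, hG a b⟩)⁻¹
    from Subtype.ext (commutatorElement_inv a b).symm, map_inv, toAdd_inv]
  rfl

theorem commutatorForm_mul_right (a b c : G) :
    commutatorForm hG ι a (b * c) = commutatorForm hG ι a b + commutatorForm hG ι a c := by
  rw [commutatorForm_swap, commutatorForm_mul_left, commutatorForm_swap b, commutatorForm_swap c]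
  ring

theorem commutatorForm_eq_zero_of_commute {a b : G} (h : Commute a b) :
    commutatorForm hG ι a b = 0 := by
  rw [commutatorForm, show (⟨⁅a, b⁆, hG _ _⟩ : center G) = 1
    from Subtype.ext (commutatorElement_eq_one_iff_commute.mpr h), map_one, toAdd_one]

theorem commutatorForm_pow_left (a b : G) (n : ℕ) :
    commutatorForm hG ι (a ^ n) b = n * commutatorForm hG ι a b := by
  induction n with
  | zero => simp [commutatorForm_eq_zero_of_commute (Commute.one_left b)]
  | succ n ih => rw [pow_succ, commutatorForm_mul_left, ih]; push_cast; ring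

theorem commutatorForm_pow_right (a b : G) (n : ℕ) :
    commutatorForm hG ι a (b ^ n) = n * commutatorForm hG ι a b := by
  rw [commutatorForm_swap, commutatorForm_pow_left, commutatorForm_swap b]
  ring

/- The factor `2` is forced: `f ⁅a, b⁆ = f (a * b) - f (b * a) = 2 * commutatorForm hG ι a b`. -/
variable (hG ι) in
structure IsQuadraticRefinement (H : Subgroup G) (f : G → ZMod p) : Prop where
  map_center (z : center G) : f z = 2 * (ι z).toAdd
  map_mul ⦃a : G⦄ (ha : a ∈ H) ⦃b : G⦄ (hb : b ∈ H) :
    f (a * b) = f a + f b + commutatorForm hG ι a b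

namespace IsQuadraticRefinement

variable {H : Subgroup G} {f : G → ZMod p}

theorem map_one (hf : IsQuadraticRefinement hG ι H f) : f 1 = 0 := by
  simpa using hf.map_center 1

theorem map_inv (hf : IsQuadraticRefinement hG ι H f) {a : G} (ha : a ∈ H) : f a⁻¹ = -f a := by
  have h := hf.map_mul ha (H.inv_mem ha)
  rw [mul_inv_cancel, hf.map_one, commutatorForm_eq_zero_of_commute (Commute.inv_right rfl)] at h
  linear_combination -h

theorem map_commutatorElement (hf : IsQuadraticRefinement hG ι H f) (a b : G) :
    f ⁅a, b⁆ = 2 * commutatorForm hG ι a b :=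
  hf.map_center ⟨_, hG a b⟩

theorem exists_extend_sup_zpowers [Finite G] [Fact p.Prime] (hexp : ∀ g : G, g ^ p = 1)
    (hZH : center G ≤ H) (hf : IsQuadraticRefinement hG ι H f) {x : G} (hx : x ∉ H)
    (t : ZMod p) :
    ∃ g, IsQuadraticRefinement hG ι (H ⊔ zpowers x) g ∧ (∀ a ∈ H, g a = f a) ∧ g x = t := by
  have := normal_of_center_le hG hZH
  -- `g (a * x ^ j) := f a + j * (commutatorForm hG ι a x + t)` is well defined, since `a ∈ H`
  -- and `j` modulo `p` are determined by `a * x ^ j`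
  let ψ : H × ℕ → ZMod p := fun aj => f aj.1 + aj.2 * (commutatorForm hG ι aj.1 x + t)
  have hψ : Function.FactorsThrough ψ fun aj => aj.1 * x ^ aj.2 := by
    rintro ⟨⟨a, ha⟩, i⟩ ⟨⟨b, hb⟩, j⟩ h
    obtain ⟨rfl, hij⟩ := eq_and_natCast_eq_of_mul_pow_eq_mul_pow hexp hx ha hb h
    simp only [ψ, hij]
  set g := Function.extend (fun aj : H × ℕ => aj.1 * x ^ aj.2) ψ 0
  have hg (a : G) (ha : a ∈ H) (j : ℕ) :
      g (a * x ^ j) = f a + j * (commutatorForm hG ι a x + t) :=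
    hψ.extend_apply 0 (⟨a, ha⟩, j)
  have hgH (a : G) (ha : a ∈ H) : g a = f a := by simpa using hg a ha 0
  refine ⟨g, ⟨fun z => (hgH z (hZH z.2)).trans (hf.map_center z), ?_⟩, hgH, by
    simpa [hf.map_one, commutatorForm_eq_zero_of_commute (Commute.one_left x)] using
      hg 1 H.one_mem 1⟩
  intro u hu v hv
  obtain ⟨a, ha, i, rfl⟩ := exists_mul_pow_eq_of_mem_sup_zpowers hu
  obtain ⟨b, hb, j, rfl⟩ := exists_mul_pow_eq_of_mem_sup_zpowers hv
  set c := ⁅x ^ i, b⁆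
  have hc : c ∈ center G := hG _ _
  have hfc : f (a * b * c) =
      f a + f b + commutatorForm hG ι a b + 2 * (i * commutatorForm hG ι x b) := by
    rw [hf.map_mul (H.mul_mem ha hb) (hZH hc), hf.map_mul ha hb, hf.map_commutatorElement,
      commutatorForm_pow_left, commutatorForm_eq_zero_of_commute (mem_center_iff.mp hc _)]
    ring
  have hcx : commutatorForm hG ι (a * b * c) x =
      commutatorForm hG ι a x + commutatorForm hG ι b x := by
    rw [commutatorForm_mul_left, commutatorForm_mul_left,
      commutatorForm_eq_zero_of_commute (mem_center_iff.mp hc _).symm, add_zero]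
  have hform : commutatorForm hG ι (a * x ^ i) (b * x ^ j) = commutatorForm hG ι a b +
      j * commutatorForm hG ι a x + i * commutatorForm hG ι x b := by
    rw [commutatorForm_mul_left, commutatorForm_mul_right, commutatorForm_mul_right,
      commutatorForm_pow_right, commutatorForm_pow_left,
      commutatorForm_eq_zero_of_commute ((Commute.refl x).pow_pow i j)]
    ring
  rw [mul_pow_mul_mul_pow_of_mem_center hc, hg _ (H.mul_mem (H.mul_mem ha hb) (hZH hc)),
    hg a ha, hg b hb, hfc, hcx, hform, commutatorForm_swap x b]
  push_cast
  ring

theorem exists_extend_top [Finite G] [Fact p.Prime] (hexp : ∀ g : G, g ^ p = 1)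
    (hZH : center G ≤ H) (hf : IsQuadraticRefinement hG ι H f) :
    ∃ g, IsQuadraticRefinement hG ι ⊤ g ∧ ∀ a ∈ H, g a = f a := by
  induction H using WellFoundedGT.induction generalizing f with
  | ind H ih =>
  obtain rfl | hlt := (le_top : H ≤ ⊤).eq_or_lt
  · exact ⟨f, hf, fun _ _ => rfl⟩
  obtain ⟨x, -, hx⟩ := SetLike.exists_of_lt hlt
  obtain ⟨g, hg, hgf, -⟩ := hf.exists_extend_sup_zpowers hexp hZH hx 0
  obtain ⟨g', hg', hg'g⟩ := ih _ (left_lt_sup.mpr fun h => hx (h (mem_zpowers x)))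
    (hZH.trans le_sup_left) hg
  exact ⟨g', hg', fun a ha => (hg'g a (mem_sup_left ha)).trans (hgf a ha)⟩

theorem eqOn_closure {g : G → ZMod p} (hf : IsQuadraticRefinement hG ι ⊤ f)
    (hg : IsQuadraticRefinement hG ι ⊤ g) {s : Set G} (h : Set.EqOn f g s) :
    Set.EqOn f g (closure s) := by
  intro w hw
  induction hw using closure_induction with
  | mem w hw => exact h hw
  | one => rw [hf.map_one, hg.map_one]
  | mul a b _ _ ha hb =>
    rw [hf.map_mul (mem_top a) (mem_top b), hg.map_mul (mem_top a) (mem_top b), ha, hb]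
  | inv a _ ha => rw [hf.map_inv (mem_top a), hg.map_inv (mem_top a), ha]

theorem comp_mulEquiv (hf : IsQuadraticRefinement hG ι ⊤ f) (α : G ≃* G)
    (hα : ∀ z ∈ center G, α z = z) : IsQuadraticRefinement hG ι ⊤ (f ∘ α) where
  map_center z := by rw [Function.comp_apply, hα z z.2, hf.map_center]
  map_mul a _ b _ := by
    have hab : (⟨⁅α a, α b⁆, hG _ _⟩ : center G) = ⟨⁅a, b⁆, hG a b⟩ := Subtype.ext <|
      show ⁅α a, α b⁆ = ⁅a, b⁆ by rw [← _root_.map_commutatorElement, hα _ (hG a b)]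
    simp only [Function.comp_apply]
    rw [_root_.map_mul, hf.map_mul (mem_top _) (mem_top _), commutatorForm, commutatorForm, hab]

end IsQuadraticRefinement

variable (hG ι) in
theorem exists_isQuadraticRefinement_center : ∃ f, IsQuadraticRefinement hG ι (center G) f := by
  classical
  refine ⟨fun w => if h : w ∈ center G then 2 * (ι ⟨w, h⟩).toAdd else 0, fun z => by simp,
    fun a ha b hb => ?_⟩
  simp only [ha, hb, mul_mem ha hb, dif_pos,
    commutatorForm_eq_zero_of_commute (mem_center_iff.mp hb a)]
  rw [show (⟨a * b, mul_mem ha hb⟩ : center G) = ⟨a, ha⟩ * ⟨b, hb⟩ from rfl, map_mul, toAdd_mul]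
  ring

variable [Finite G] [Fact p.Prime] (hexp : ∀ g : G, g ^ p = 1)
include hexp

variable (hG ι) in
theorem exists_isQuadraticRefinement_top : ∃ f, IsQuadraticRefinement hG ι ⊤ f := by
  obtain ⟨f₀, hf₀⟩ := exists_isQuadraticRefinement_center hG ι
  obtain ⟨f, hf, -⟩ := hf₀.exists_extend_top hexp le_rfl
  exact ⟨f, hf⟩

theorem exists_isQuadraticRefinement_apply_eq {w : G} (hw : w ∉ center G) (t : ZMod p) :
    ∃ f, IsQuadraticRefinement hG ι ⊤ f ∧ f w = t := by
  obtain ⟨f₀, hf₀⟩ := exists_isQuadraticRefinement_center hG ι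
  obtain ⟨f₁, hf₁, -, hw₁⟩ := hf₀.exists_extend_sup_zpowers hexp le_rfl hw t
  obtain ⟨f, hf, hff₁⟩ := hf₁.exists_extend_top hexp le_sup_left
  exact ⟨f, hf, (hff₁ w (mem_sup_right (mem_zpowers w))).trans hw₁⟩

theorem eq_of_forall_isQuadraticRefinement_apply_eq (h2 : (2 : ZMod p) ≠ 0)
    (hι : Function.Injective ι) {x y : G}
    (h : ∀ f, IsQuadraticRefinement hG ι ⊤ f → f y = f x) : y = x := by
  set d := y * x⁻¹
  have hfd (f) (hf : IsQuadraticRefinement hG ι ⊤ f) : f d = -commutatorForm hG ι d x := by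
    have := hf.map_mul (mem_top d) (mem_top x)
    rw [inv_mul_cancel_right, h f hf] at this
    linear_combination -this
  by_cases hd : d ∈ center G
  · obtain ⟨f, hf⟩ := exists_isQuadraticRefinement_top hG ι hexp
    have h0 := hfd f hf
    rw [commutatorForm_eq_zero_of_commute (mem_center_iff.mp hd x).symm, neg_zero,
      show d = ((⟨d, hd⟩ : center G) : G) from rfl, hf.map_center, mul_eq_zero,
      or_iff_right h2, toAdd_eq_zero, ← map_one ι, hι.eq_iff] at h0
    exact mul_inv_eq_one.mp (congrArg Subtype.val h0)
  · obtain ⟨f, hf, hfd'⟩ :=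
      exists_isQuadraticRefinement_apply_eq hexp hd (1 - commutatorForm hG ι d x)
    have := hfd f hf
    rw [hfd'] at this
    simp at this

end QuadraticRefinement

section Action

variable {G : Type} [Group G] {p : ℕ} {hG : ∀ a b : G, ⁅a, b⁆ ∈ center G}
  {ι : center G →* Multiplicative (ZMod p)}

variable (hG ι) in
def quadraticRefinementPerm :
    centerFixingAuts G →* Equiv.Perm {f // IsQuadraticRefinement hG ι ⊤ f} where
  toFun α :=
    { toFun f := ⟨f.1 ∘ (α⁻¹ : centerFixingAuts G).1, f.2.comp_mulEquiv _ (α⁻¹).2⟩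
      invFun f := ⟨f.1 ∘ α.1, f.2.comp_mulEquiv _ α.2⟩
      left_inv f := by ext; simp
      right_inv f := by ext; simp }
  map_one' := by ext; simp
  map_mul' α β := by ext; simp

theorem quadraticRefinementPerm_injective [Finite G] [Fact p.Prime] (hexp : ∀ g : G, g ^ p = 1)
    (h2 : (2 : ZMod p) ≠ 0) (hι : Function.Injective ι) :
    Function.Injective (quadraticRefinementPerm hG ι) := by
  refine (injective_iff_map_eq_one _).mpr fun α hα => ?_
  rw [← inv_eq_one]
  ext w
  exact eq_of_forall_isQuadraticRefinement_apply_eq hexp h2 hι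
    fun f hf => congrFun (congrArg Subtype.val (Equiv.ext_iff.mp hα ⟨f, hf⟩)) w

theorem card_isQuadraticRefinement_le [NeZero p] {k : ℕ} {xs : Fin k → G}
    (hxs : center G ⊔ closure (Set.range xs) = ⊤) :
    Nat.card {f // IsQuadraticRefinement hG ι ⊤ f} ≤ p ^ k := by
  have hinj : Function.Injective fun f : {f // IsQuadraticRefinement hG ι ⊤ f} => f.1 ∘ xs := by
    intro f g hfg
    refine Subtype.ext <| funext fun w =>
      f.2.eqOn_closure g.2 (s := center G ∪ Set.range xs) ?_ ?_
    · rintro z (hz | ⟨i, rfl⟩)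
      · exact (f.2.map_center ⟨z, hz⟩).trans (g.2.map_center ⟨z, hz⟩).symm
      · exact congrFun hfg i
    · rw [Subgroup.closure_union, closure_eq, hxs]; exact mem_top w
  calc Nat.card {f // IsQuadraticRefinement hG ι ⊤ f} ≤ Nat.card (Fin k → ZMod p) :=
        Nat.card_le_card_of_injective _ hinj
    _ = p ^ k := by simp

end Action

/-- **Proposition 2.1 (i)**: if `P` is a `p`-group of symplectic type (every
characteristic abelian subgroup is cyclic) of exponent `p` (`p` odd) and order
`p^{2m+1}`, then `C = C_{Aut(P)}(Z(P))` embeds into `Sym(p^{2m})`. -/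
theorem statement13 (p m : ℕ) (hp : p.Prime) (hodd : Odd p)
    (P : Type) [Group P] [Finite P]
    (hsymp : ∀ H : Subgroup P, H.Characteristic →
      (∀ x y : H, x * y = y * x) → IsCyclic H)
    (hexp : Monoid.exponent P = p)
    (hcard : Nat.card P = p ^ (2 * m + 1)) :
    ∃ f : centerFixingAuts P →* Equiv.Perm (Fin (p ^ (2 * m))),
      Function.Injective f := by
  have := Fact.mk hp
  have hexp' (g : P) : g ^ p = 1 := hexp ▸ Monoid.pow_exponent_eq_one g
  have hpg : IsPGroup p P := IsPGroup.of_card hcard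
  have : Nontrivial P :=
    Finite.one_lt_card_iff_nontrivial.mp <| hcard ▸ Nat.one_lt_pow (by omega) hp.one_lt
  have hG := IsSymplecticType.commutatorElement_mem_center hsymp hexp' hpg
  let ι : center P ≃* Multiplicative (ZMod p) :=
    mulEquivOfPrimeCardEq (IsSymplecticType.card_center hsymp hexp' hpg) (by simp)
  have h2 : (2 : ZMod p) ≠ 0 := by
    rw [← one_add_one_eq_two, Ne, ZMod.add_self_eq_zero_iff_eq_zero hodd]
    exact one_ne_zero
  obtain ⟨k, xs, hxs, hk⟩ := hpg.exists_sup_closure_eq (le_top : center P ≤ ⊤)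
  have hkm : k ≤ 2 * m := by
    rw [IsSymplecticType.card_center hsymp hexp' hpg, card_top, hcard, ← pow_succ',
      Nat.pow_le_pow_iff_right hp.one_lt] at hk
    omega
  let Ω := {f // IsQuadraticRefinement hG ι.toMonoidHom ⊤ f}
  have : Fintype Ω := Fintype.ofFinite Ω
  obtain ⟨e⟩ : Nonempty (Ω ↪ Fin (p ^ (2 * m))) := by
    refine Function.Embedding.nonempty_of_card_le ?_
    rw [Fintype.card_fin, ← Nat.card_eq_fintype_card]
    exact (card_isQuadraticRefinement_le hxs).trans (Nat.pow_le_pow_right hp.pos hkm)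
  exact ⟨(Equiv.Perm.viaEmbeddingHom e).comp (quadraticRefinementPerm hG ι.toMonoidHom),
    (Equiv.Perm.viaEmbeddingHom_injective e).comp
      (quadraticRefinementPerm_injective hexp' h2 ι.injective)⟩
end
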